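/- For -1 < α < 0 and m a nonnegative integer, ∫_0^∞ x^α e^{-x} / (L_m^{-α-1}(-x))^2 dx = m!·(-1)^m·Γ(1 + α - m) = Γ(α+1)·Γ(-α)·m! / Γ(m - α). -/

import Mathlib

open Finset

/-- Generalized Laguerre polynomial `L_n^α(x) = ∑_{k=0}^n (-1)^k binom(n+α, n-k) x^k / k!`. -/
noncomputable def lag (α : ℝ) (n : ℕ) (x : ℝ) : ℝ :=
  ∑ k ∈ Finset.range (n + 1),
    (-1 : ℝ) ^ k * (∏ j ∈ Finset.range (n - k), (α + (k : ℝ) + 1 + (j : ℝ))) /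
      ((Nat.factorial (n - k) : ℝ) * (Nat.factorial k : ℝ)) * x ^ k

/-- Generalized Laguerre polynomial with integer index, with the convention
`L_n^α := 0` for `n < 0`. -/
noncomputable def lagZ (α : ℝ) (n : ℤ) (x : ℝ) : ℝ :=
  if 0 ≤ n then lag α n.toNat x else 0

open MeasureTheory Filter Topology
open scoped Nat

/-! With `β = -α - 1 > -1` the polynomial `L_m^β(-x)` has positive coefficients, so the weight
`w_m(x) = x^α e^{-x} / L_m^β(-x)²` is integrable on `(0, ∞)`. The classical identities
`d/dx L_n^β = L_n^β - L_n^{β+1}`, `L_{n+1}^{β+1} = L_{n+1}^β + L_n^{β+1}` and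
`x L_n^{β+1} = (n + β + 1) L_n^β - (n + 1) L_{n+1}^β` show that
`x^{α+1} e^{-x} / (L_{m+1}^β(-x) L_m^β(-x))` is an antiderivative of `(m - α) w_{m+1} - (m + 1) w_m`
vanishing at `0` and at `∞`. Hence `(m - α) ∫ w_{m+1} = (m + 1) ∫ w_m`, while `∫ w_0 = Γ(α + 1)`. -/

/-- `lagCoeff β n k = binom(n + β, n - k) / k!`. -/
noncomputable def lagCoeff (β : ℝ) (n k : ℕ) : ℝ :=
  (∏ j ∈ range (n - k), (β + (k : ℝ) + 1 + (j : ℝ))) / ((n - k)! * k !)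

section Algebra

variable (β : ℝ) (n : ℕ)

lemma lag_eq_sum (x : ℝ) : lag β n x = ∑ k ∈ range (n + 1), lagCoeff β n k * (-x) ^ k :=
  sum_congr rfl fun k _ => by rw [lagCoeff, neg_pow]; ring

lemma lag_zero (x : ℝ) : lag β 0 x = 1 := by
  simp [lag]

lemma lagCoeff_self : lagCoeff β n n = (n ! : ℝ)⁻¹ := by
  simp [lagCoeff]

lemma lagCoeff_add_one_succ {k : ℕ} (hk : k ≤ n) :
    lagCoeff (β + 1) (n + 1) k = lagCoeff β (n + 1) k + lagCoeff (β + 1) n k := by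
  obtain ⟨d, rfl⟩ := Nat.exists_eq_add_of_le hk
  rw [lagCoeff, lagCoeff, lagCoeff, show k + d + 1 - k = d + 1 by omega,
    show k + d - k = d by omega, prod_range_succ, prod_range_succ', Nat.factorial_succ]
  have hshift : ∏ j ∈ range d, (β + k + 1 + (j + 1 : ℕ)) = ∏ j ∈ range d, (β + 1 + k + 1 + j) :=
    prod_congr rfl fun j _ => by push_cast; ring
  rw [hshift]
  push_cast
  field_simp
  ring

lemma succ_mul_lagCoeff_succ_succ (k : ℕ) :
    (k + 1) * lagCoeff β (n + 1) (k + 1) = lagCoeff (β + 1) n k := by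
  have hshift : ∏ j ∈ range (n - k), (β + (k + 1 : ℕ) + 1 + j)
      = ∏ j ∈ range (n - k), (β + 1 + k + 1 + j) :=
    prod_congr rfl fun j _ => by push_cast; ring
  rw [lagCoeff, lagCoeff, Nat.add_sub_add_right, hshift, Nat.factorial_succ]
  push_cast
  field_simp

lemma succ_mul_lagCoeff_succ_zero :
    (n + 1) * lagCoeff β (n + 1) 0 = (n + β + 1) * lagCoeff β n 0 := by
  simp only [lagCoeff, Nat.sub_zero, prod_range_succ, Nat.factorial_succ]
  push_cast
  field_simp
  ring

lemma lagCoeff_add_one_of_lt {k : ℕ} (hk : k < n) :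
    lagCoeff (β + 1) n k
      = (n + 1) * lagCoeff β (n + 1) (k + 1) - (n + β + 1) * lagCoeff β n (k + 1) := by
  obtain ⟨d, rfl⟩ := Nat.exists_eq_add_of_lt hk
  rw [lagCoeff, lagCoeff, lagCoeff, show k + d + 1 - k = d + 1 by omega,
    show k + d + 1 + 1 - (k + 1) = d + 1 by omega, show k + d + 1 - (k + 1) = d by omega,
    prod_range_succ, prod_range_succ, Nat.factorial_succ k, Nat.factorial_succ d]
  have hshift : ∏ j ∈ range d, (β + 1 + k + 1 + j) = ∏ j ∈ range d, (β + (k + 1 : ℕ) + 1 + j) :=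
    prod_congr rfl fun j _ => by push_cast; ring
  rw [hshift]
  push_cast
  field_simp
  ring

end Algebra

section Laguerre

variable (β : ℝ) (n : ℕ) (x : ℝ)

lemma lag_add_one_succ : lag (β + 1) (n + 1) x = lag β (n + 1) x + lag (β + 1) n x := by
  have hlow : ∀ k ∈ range (n + 1), lagCoeff (β + 1) (n + 1) k * (-x) ^ k
      = lagCoeff β (n + 1) k * (-x) ^ k + lagCoeff (β + 1) n k * (-x) ^ k := fun k hk => by
    rw [lagCoeff_add_one_succ β n (mem_range_succ_iff.1 hk), add_mul]
  rw [lag_eq_sum, lag_eq_sum, lag_eq_sum, sum_range_succ _ (n + 1), sum_range_succ _ (n + 1),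
    sum_congr rfl hlow, sum_add_distrib, lagCoeff_self, lagCoeff_self]
  ring

lemma hasDerivAt_lag_succ : HasDerivAt (lag β (n + 1)) (-lag (β + 1) n x) x := by
  have hsum : HasDerivAt (fun y => ∑ k ∈ range (n + 2), lagCoeff β (n + 1) k * (-y) ^ k)
      (∑ k ∈ range (n + 2), lagCoeff β (n + 1) k * (k * (-x) ^ (k - 1) * -1)) x :=
    HasDerivAt.fun_sum fun k _ => ((hasDerivAt_neg x).pow k).const_mul _
  convert hsum using 1
  · exact funext (lag_eq_sum β (n + 1))
  · rw [sum_range_succ', lag_eq_sum, ← sum_neg_distrib]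
    simp only [Nat.cast_zero, zero_mul, mul_zero, add_zero, Nat.cast_succ, Nat.add_sub_cancel]
    refine sum_congr rfl fun k _ => ?_
    rw [← succ_mul_lagCoeff_succ_succ]
    ring

lemma hasDerivAt_lag : HasDerivAt (lag β n) (lag β n x - lag (β + 1) n x) x := by
  cases n with
  | zero =>
    rw [lag_zero, lag_zero, sub_self, show lag β 0 = fun _ => 1 from funext (lag_zero β)]
    exact hasDerivAt_const x 1
  | succ n =>
    rw [lag_add_one_succ, sub_add_cancel_left]
    exact hasDerivAt_lag_succ β n x

lemma mul_lag_add_one :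
    x * lag (β + 1) n x = (n + β + 1) * lag β n x - (n + 1) * lag β (n + 1) x := by
  have hmid : x * ∑ k ∈ range n, lagCoeff (β + 1) n k * (-x) ^ k
      = (n + β + 1) * ∑ k ∈ range n, lagCoeff β n (k + 1) * (-x) ^ (k + 1)
        - (n + 1) * ∑ k ∈ range n, lagCoeff β (n + 1) (k + 1) * (-x) ^ (k + 1) := by
    rw [mul_sum, mul_sum, mul_sum, ← sum_sub_distrib]
    exact sum_congr rfl fun k hk => by rw [lagCoeff_add_one_of_lt β n (mem_range.1 hk)]; ring
  rw [lag_eq_sum, lag_eq_sum, lag_eq_sum, sum_range_succ, sum_range_succ' _ n,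
    sum_range_succ' _ (n + 1), sum_range_succ (fun k => lagCoeff β (n + 1) (k + 1) * _) n,
    mul_add, hmid]
  linear_combination
    succ_mul_lagCoeff_succ_zero β n + (-x) ^ (n + 1) * succ_mul_lagCoeff_succ_succ β n n

end Laguerre

section Positivity

variable {β : ℝ} (n : ℕ) {x : ℝ}

lemma lagCoeff_pos (hβ : -1 < β) (k : ℕ) : 0 < lagCoeff β n k :=
  div_pos (prod_pos fun j _ => by linarith [(by positivity : (0 : ℝ) ≤ k + j)]) (by positivity)

lemma lag_neg_eq_sum (x : ℝ) : lag β n (-x) = ∑ k ∈ range (n + 1), lagCoeff β n k * x ^ k := by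
  simp only [lag_eq_sum, neg_neg]

lemma lag_neg_pos (hβ : -1 < β) (hx : 0 ≤ x) : 0 < lag β n (-x) := by
  rw [lag_neg_eq_sum]
  refine sum_pos' (fun k _ => by have := lagCoeff_pos n hβ k; positivity)
    ⟨0, by simp, by simpa using lagCoeff_pos n hβ 0⟩

lemma lag_zero_le_lag_neg (hβ : -1 < β) (hx : 0 ≤ x) : lag β n 0 ≤ lag β n (-x) := by
  rw [← neg_zero, lag_neg_eq_sum, lag_neg_eq_sum]
  exact sum_le_sum fun k _ =>
    mul_le_mul_of_nonneg_left (pow_le_pow_left₀ le_rfl hx k) (lagCoeff_pos n hβ k).le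

end Positivity

lemma continuous_lag (β : ℝ) (n : ℕ) : Continuous (lag β n) := by
  unfold lag
  fun_prop

section Weight

variable {α : ℝ}

noncomputable def typeIIIWeight (α : ℝ) (m : ℕ) (x : ℝ) : ℝ :=
  x ^ α * Real.exp (-x) / lag (-α - 1) m (-x) ^ 2

lemma integrableOn_typeIIIWeight (hα1 : -1 < α) (hα2 : α < 0) (m : ℕ) :
    IntegrableOn (typeIIIWeight α m) (Set.Ioi 0) := by
  have hβ : -1 < -α - 1 := by linarith
  have hc : 0 < lag (-α - 1) m 0 := by simpa using lag_neg_pos m hβ le_rfl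
  have hmeas : Measurable (typeIIIWeight α m) := by
    have := (continuous_lag (-α - 1) m).measurable
    unfold typeIIIWeight
    fun_prop
  refine Integrable.mono' ((Real.GammaIntegral_convergent (by linarith : 0 < α + 1)).const_mul
    (lag (-α - 1) m 0 ^ 2)⁻¹) hmeas.aestronglyMeasurable ?_
  filter_upwards [ae_restrict_mem measurableSet_Ioi] with x (hx : 0 < x)
  rw [Real.norm_of_nonneg (by unfold typeIIIWeight; positivity), add_sub_cancel_right,
    typeIIIWeight, ← div_eq_inv_mul, mul_comm (Real.exp _)]
  exact div_le_div_of_nonneg_left (by positivity) (by positivity)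
    (pow_le_pow_left₀ hc.le (lag_zero_le_lag_neg m hβ hx.le) 2)

noncomputable def typeIIIPrimitive (α : ℝ) (m : ℕ) (x : ℝ) : ℝ :=
  x ^ (α + 1) * Real.exp (-x) / (lag (-α - 1) (m + 1) (-x) * lag (-α - 1) m (-x))

lemma hasDerivAt_typeIIIPrimitive (hα : α < 0) (m : ℕ) {x : ℝ} (hx : 0 < x) :
    HasDerivAt (typeIIIPrimitive α m)
      ((m - α) * typeIIIWeight α (m + 1) x - (m + 1) * typeIIIWeight α m x) x := by
  have hβ : -1 < -α - 1 := by linarith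
  have hA := lag_neg_pos (m + 1) hβ hx.le
  have hB := lag_neg_pos m hβ hx.le
  have hlag (n : ℕ) : HasDerivAt (fun y => lag (-α - 1) n (-y))
      (lag (-α - 1 + 1) n (-x) - lag (-α - 1) n (-x)) x := by
    have := (hasDerivAt_lag (-α - 1) n (-x)).comp x (hasDerivAt_neg x)
    rwa [mul_neg_one, neg_sub] at this
  have hpow : HasDerivAt (fun y => y ^ (α + 1)) ((α + 1) * x ^ α) x := by
    simpa using Real.hasDerivAt_rpow_const (p := α + 1) (Or.inl hx.ne')
  have hexp : HasDerivAt (fun y => Real.exp (-y)) (-Real.exp (-x)) x := by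
    simpa using (hasDerivAt_neg x).exp
  unfold typeIIIPrimitive
  refine ((hpow.fun_mul hexp).fun_div ((hlag (m + 1)).fun_mul (hlag m))
    (mul_pos hA hB).ne').congr_deriv ?_
  have hpar := lag_add_one_succ (-α - 1) m (-x)
  have hmul := mul_lag_add_one (-α - 1) m (-x)
  rw [typeIIIWeight, typeIIIWeight, Real.rpow_add_one hx.ne', hpar]
  field_simp
  linear_combination (lag (-α - 1) (m + 1) (-x) + lag (-α - 1) m (-x)) * hmul

lemma typeIIIPrimitive_zero (hα : -1 < α) (m : ℕ) : typeIIIPrimitive α m 0 = 0 := by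
  simp [typeIIIPrimitive, Real.zero_rpow (by linarith : α + 1 ≠ 0)]

lemma continuousAt_typeIIIPrimitive_zero (hα1 : -1 < α) (hα2 : α < 0) (m : ℕ) :
    ContinuousAt (typeIIIPrimitive α m) 0 := by
  have hβ : -1 < -α - 1 := by linarith
  have hlag (n : ℕ) : ContinuousAt (fun y => lag (-α - 1) n (-y)) 0 :=
    ((continuous_lag _ n).comp continuous_neg).continuousAt
  refine ((Real.continuousAt_rpow_const 0 (α + 1) (Or.inr (by linarith))).mul
    (Real.continuous_exp.comp continuous_neg).continuousAt).div ((hlag (m + 1)).mul (hlag m)) ?_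
  exact (mul_pos (lag_neg_pos (m + 1) hβ le_rfl) (lag_neg_pos m hβ le_rfl)).ne'

lemma tendsto_typeIIIPrimitive_atTop (hα : α < 0) (m : ℕ) :
    Tendsto (typeIIIPrimitive α m) atTop (𝓝 0) := by
  have hβ : -1 < -α - 1 := by linarith
  set c := lag (-α - 1) (m + 1) 0 * lag (-α - 1) m 0
  have hc : 0 < c := by
    simpa using mul_pos (lag_neg_pos (m + 1) hβ le_rfl) (lag_neg_pos m hβ le_rfl)
  have hdecay := (tendsto_rpow_mul_exp_neg_mul_atTop_nhds_zero (α + 1) 1 one_pos).const_mul c⁻¹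
  rw [mul_zero] at hdecay
  refine tendsto_of_tendsto_of_tendsto_of_le_of_le' tendsto_const_nhds hdecay ?_ ?_ <;>
    filter_upwards [eventually_ge_atTop 0] with x hx
  · have := lag_neg_pos (m + 1) hβ hx
    have := lag_neg_pos m hβ hx
    unfold typeIIIPrimitive
    positivity
  · rw [typeIIIPrimitive, neg_one_mul, ← div_eq_inv_mul]
    exact div_le_div_of_nonneg_left (by positivity) hc (mul_le_mul
      (lag_zero_le_lag_neg (m + 1) hβ hx) (lag_zero_le_lag_neg m hβ hx) (by simpa using
        (lag_neg_pos m hβ le_rfl).le) (lag_neg_pos (m + 1) hβ hx).le)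

lemma integral_typeIIIWeight_succ (hα1 : -1 < α) (hα2 : α < 0) (m : ℕ) :
    (m - α) * ∫ x in Set.Ioi 0, typeIIIWeight α (m + 1) x
      = (m + 1) * ∫ x in Set.Ioi 0, typeIIIWeight α m x := by
  have hint (n : ℕ) (c : ℝ) := (integrableOn_typeIIIWeight hα1 hα2 n).const_mul c
  have hFTC := integral_Ioi_of_hasDerivAt_of_tendsto
    (continuousAt_typeIIIPrimitive_zero hα1 hα2 m).continuousWithinAt
    (fun x hx => hasDerivAt_typeIIIPrimitive hα2 m hx) ((hint (m + 1) _).sub (hint m _))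
    (tendsto_typeIIIPrimitive_atTop hα2 m)
  rw [integral_sub (hint (m + 1) _) (hint m _), integral_const_mul, integral_const_mul,
    typeIIIPrimitive_zero hα1, sub_zero] at hFTC
  linarith

lemma integral_typeIIIWeight_zero (hα : -1 < α) :
    ∫ x in Set.Ioi 0, typeIIIWeight α 0 x = Real.Gamma (α + 1) := by
  rw [Real.Gamma_eq_integral (by linarith), add_sub_cancel_right]
  refine setIntegral_congr_fun measurableSet_Ioi fun x _ => ?_
  simp [typeIIIWeight, lag_zero, mul_comm]

lemma integral_typeIIIWeight (hα1 : -1 < α) (hα2 : α < 0) (m : ℕ) :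
    ∫ x in Set.Ioi 0, typeIIIWeight α m x
      = Real.Gamma (α + 1) * Real.Gamma (-α) * m ! / Real.Gamma (m - α) := by
  induction m with
  | zero => simp [integral_typeIIIWeight_zero hα1, (Real.Gamma_pos_of_pos (neg_pos.2 hα2)).ne']
  | succ m ih =>
    have hpos : 0 < (m : ℝ) - α := by linarith [m.cast_nonneg (α := ℝ)]
    have hΓ := (Real.Gamma_pos_of_pos hpos).ne'
    have hstep := integral_typeIIIWeight_succ hα1 hα2 m
    rw [ih] at hstep
    apply mul_left_cancel₀ hpos.ne'
    rw [hstep, Nat.cast_succ, show (m : ℝ) + 1 - α = m - α + 1 by ring,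
      Real.Gamma_add_one hpos.ne', Nat.factorial_succ]
    push_cast
    field_simp

end Weight

lemma neg_one_pow_mul_Gamma_one_add_sub_mul_Gamma_sub {α : ℝ} (hα : ∀ n : ℕ, α ≠ n) (m : ℕ) :
    (-1) ^ m * Real.Gamma (1 + α - m) * Real.Gamma (m - α)
      = Real.Gamma (α + 1) * Real.Gamma (-α) := by
  induction m with
  | zero => simp [add_comm]
  | succ m ih =>
    have hm : α - m ≠ 0 := sub_ne_zero.2 (hα m)
    rw [← ih, Nat.cast_succ, show 1 + α - (m + 1) = α - m by ring,
      show 1 + α - m = α - m + 1 by ring, show (m : ℝ) + 1 - α = m - α + 1 by ring,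
      Real.Gamma_add_one hm,
      Real.Gamma_add_one (sub_ne_zero.2 (hα m).symm)]
    ring

/-- for `-1 < α < 0`,
`∫_0^∞ x^α e^{-x}/(L_m^{-α-1}(-x))² dx = m! (-1)^m Γ(1+α-m) = Γ(α+1)Γ(-α)m!/Γ(m-α)`. -/
theorem typeIII_weight_integral (α : ℝ) (hα1 : -1 < α) (hα2 : α < 0) (m : ℕ) :
    (∫ x in Set.Ioi (0 : ℝ), x ^ α * Real.exp (-x) / (lag (-α - 1) m (-x)) ^ 2)
        = (Nat.factorial m : ℝ) * (-1) ^ m * Real.Gamma (1 + α - m)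
      ∧ (∫ x in Set.Ioi (0 : ℝ), x ^ α * Real.exp (-x) / (lag (-α - 1) m (-x)) ^ 2)
        = Real.Gamma (α + 1) * Real.Gamma (-α) * (Nat.factorial m : ℝ)
            / Real.Gamma ((m : ℝ) - α) := by
  have hI := integral_typeIIIWeight hα1 hα2 m
  have hΓ := neg_one_pow_mul_Gamma_one_add_sub_mul_Gamma_sub
    (fun n => (hα2.trans_le n.cast_nonneg).ne) m
  have hpos := Real.Gamma_pos_of_pos (by linarith [m.cast_nonneg (α := ℝ)] : 0 < (m : ℝ) - α)
  refine ⟨hI.trans ?_, hI⟩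
  rw [← hΓ]
  field_simp
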